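/- Consider the SIR⁽²⁾S model with vaccination and assume R₀ ≥ 2·(c₁+c₂+μ)/c₁. Set η₁* = c₁·R₀/2 − (c₁+c₂+μ) (so η₁* ≥ 0) and θ_c = μ + (η₁* + c₂)·(2/R₀). Then for every pair (η_s, η₁) of nonnegative rates with R_e(η_s, η₁) = 1 one has θ(η_s, η₁) ≥ θ_c, and θ_c is the infimum of θ(η_s, η₁) over all such pairs: for every ε > 0 there exist nonnegative (η_s, η₁) with R_e(η_s, η₁) = 1 and θ(η_s, η₁) < θ_c + ε. -/

import Mathlib

/-- D = (c₁+μ)(c₂+μ) + μ·η₁. -/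
def sir2sD (μ c₁ c₂ η₁ : ℝ) : ℝ := (c₁ + μ) * (c₂ + μ) + μ * η₁

/-- E = D + ηs·(c₁+c₂+μ+η₁). -/
def sir2sE (μ c₁ c₂ ηs η₁ : ℝ) : ℝ := sir2sD μ c₁ c₂ η₁ + ηs * (c₁ + c₂ + μ + η₁)

/-- Effective reproduction number R_e(ηs, η₁) = R₀·(D + ηs·c₁/2)/E with R₀ = β/(γ+μ). -/
noncomputable def sir2sRe (β γ μ c₁ c₂ ηs η₁ : ℝ) : ℝ :=
  β / (γ + μ) * (sir2sD μ c₁ c₂ η₁ + ηs * c₁ / 2) / sir2sE μ c₁ c₂ ηs η₁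

/-- Vaccine supply at the disease-free equilibrium: θ(ηs, η₁) = ηs·D/E + η₁·ηs·c₁/E. -/
noncomputable def sir2sTheta (μ c₁ c₂ ηs η₁ : ℝ) : ℝ :=
  ηs * sir2sD μ c₁ c₂ η₁ / sir2sE μ c₁ c₂ ηs η₁ +
    η₁ * (ηs * c₁) / sir2sE μ c₁ c₂ ηs η₁

set_option maxHeartbeats 1600000 in
/-- If R₀ ≥ 2(c₁+c₂+μ)/c₁, then with η₁* = c₁R₀/2 − (c₁+c₂+μ) ≥ 0 and
θ_c = μ + (η₁* + c₂)·(2/R₀), every nonnegative pair (ηs, η₁) with R_e(ηs, η₁) = 1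
has vaccine supply θ(ηs, η₁) ≥ θ_c, and θ_c is the infimum of these supplies. -/
theorem sir2s_critical_vaccine_supply_large_R0
    (β γ μ c₁ c₂ : ℝ) (hβ : 0 < β) (hγ : 0 < γ) (hμ : 0 < μ)
    (hc₁ : 0 < c₁) (hc₂ : 0 < c₂)
    (hR0 : 2 * (c₁ + c₂ + μ) / c₁ ≤ β / (γ + μ))
    (η₁_star θc : ℝ)
    (hη₁_star : η₁_star = c₁ * (β / (γ + μ)) / 2 - (c₁ + c₂ + μ))
    (hθc : θc = μ + (η₁_star + c₂) * (2 / (β / (γ + μ)))) :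
    0 ≤ η₁_star ∧
    (∀ ηs η₁ : ℝ, 0 ≤ ηs → 0 ≤ η₁ → sir2sRe β γ μ c₁ c₂ ηs η₁ = 1 →
      θc ≤ sir2sTheta μ c₁ c₂ ηs η₁) ∧
    (∀ ε : ℝ, 0 < ε → ∃ ηs η₁ : ℝ, 0 ≤ ηs ∧ 0 ≤ η₁ ∧
      sir2sRe β γ μ c₁ c₂ ηs η₁ = 1 ∧ sir2sTheta μ c₁ c₂ ηs η₁ < θc + ε) := by
  obtain ⟨r, hr⟩ : ∃ r : ℝ, β / (γ + μ) = r := ⟨_, rfl⟩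
  rw [hr] at hR0 hη₁_star hθc
  have hγμ : 0 < γ + μ := by linarith
  have hrc : 2 * (c₁ + c₂ + μ) ≤ c₁ * r := by
    have := (div_le_iff₀ hc₁).mp hR0
    linarith
  have hr2 : 2 < r := by nlinarith
  have hr0 : (0:ℝ) < r := by linarith
  have hstar : 0 ≤ η₁_star := by rw [hη₁_star]; linarith
  have hθcr : θc * r = (μ + c₁) * (r - 2) := by
    rw [hθc, hη₁_star]
    field_simp
    ring
  refine ⟨hstar, ?_, ?_⟩
  · intro ηs η₁ hs h1 hRe
    have hD : 0 < sir2sD μ c₁ c₂ η₁ := by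
      unfold sir2sD; nlinarith
    have hE : 0 < sir2sE μ c₁ c₂ ηs η₁ := by
      unfold sir2sE sir2sD; nlinarith
    unfold sir2sRe at hRe
    rw [hr, div_eq_one_iff_eq hE.ne'] at hRe
    unfold sir2sTheta
    rw [← add_div, le_div_iff₀ hE]
    have key : r * (ηs * sir2sD μ c₁ c₂ η₁ + η₁ * (ηs * c₁)) -
        (θc * r) * sir2sE μ c₁ c₂ ηs η₁ = r * (μ + c₁) * sir2sD μ c₁ c₂ η₁ := by
      rw [hθcr]
      simp only [sir2sD, sir2sE] at hRe ⊢
      linear_combination (-2 * (μ + c₁)) * hRe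
    nlinarith [key, mul_pos (mul_pos hr0 (by linarith : (0:ℝ) < μ + c₁)) hD]
  · intro ε hε
    have hμc : (0:ℝ) < μ + c₁ := by linarith
    obtain ⟨δ, hδdef⟩ : ∃ x : ℝ, x = ε * (c₁ + c₂ + μ) / (2 * (μ + c₁)) := ⟨_, rfl⟩
    have hδ : 0 < δ := by rw [hδdef]; positivity
    have hδprop : δ * (2 * (μ + c₁)) = ε * (c₁ + c₂ + μ) := by
      rw [hδdef]; field_simp
    obtain ⟨η₁, hη₁def⟩ : ∃ x : ℝ, x = η₁_star + δ := ⟨_, rfl⟩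
    have h1 : 0 ≤ η₁ := by rw [hη₁def]; linarith
    obtain ⟨D, hDdef⟩ : ∃ x : ℝ, x = sir2sD μ c₁ c₂ η₁ := ⟨_, rfl⟩
    have hD : 0 < D := by rw [hDdef]; unfold sir2sD; nlinarith
    obtain ⟨ηs, hηsdef⟩ : ∃ x : ℝ, x = (r - 1) * D / δ := ⟨_, rfl⟩
    have hs : 0 ≤ ηs := by
      rw [hηsdef]
      apply div_nonneg _ hδ.le
      nlinarith
    have hηsδ : ηs * δ = (r - 1) * D := by
      rw [hηsdef]; field_simp
    have hE : 0 < sir2sE μ c₁ c₂ ηs η₁ := by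
      unfold sir2sE
      rw [← hDdef]
      nlinarith
    have hReEq : r * (sir2sD μ c₁ c₂ η₁ + ηs * c₁ / 2) = sir2sE μ c₁ c₂ ηs η₁ := by
      have hη₁' : η₁ = c₁ * r / 2 - (c₁ + c₂ + μ) + δ := by rw [hη₁def, hη₁_star]
      simp only [sir2sE, sir2sD] at *
      linear_combination -hηsδ - ηs * hη₁' - (r - 1) * hDdef
    have hRe1 : sir2sRe β γ μ c₁ c₂ ηs η₁ = 1 := by
      unfold sir2sRe
      rw [hr, div_eq_one_iff_eq hE.ne']
      exact hReEq
    refine ⟨ηs, η₁, hs, h1, hRe1, ?_⟩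
    unfold sir2sTheta
    rw [← add_div, div_lt_iff₀ hE, ← hDdef]
    have key : r * (ηs * D + η₁ * (ηs * c₁)) -
        (θc * r) * sir2sE μ c₁ c₂ ηs η₁ = r * (μ + c₁) * D := by
      rw [hθcr, hDdef]
      simp only [sir2sD, sir2sE] at hReEq ⊢
      linear_combination (-2 * (μ + c₁)) * hReEq
    have h4 : ε * (ηs * (c₁ + c₂ + μ)) = 2 * (μ + c₁) * ((r - 1) * D) := by
      linear_combination -ηs * hδprop + 2 * (μ + c₁) * hηsδ
    have hεE : (μ + c₁) * D < ε * sir2sE μ c₁ c₂ ηs η₁ := by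
      have hEform : sir2sE μ c₁ c₂ ηs η₁ = D + ηs * (c₁ + c₂ + μ + η₁) := by
        unfold sir2sE; rw [← hDdef]
      rw [hEform]
      have h6 : (μ + c₁) * D < 2 * (μ + c₁) * ((r - 1) * D) := by
        nlinarith [mul_pos hμc hD]
      nlinarith [h4, h6, mul_nonneg (mul_nonneg hε.le hs) h1, mul_pos hε hD]
    have h7 := mul_lt_mul_of_pos_left hεE hr0
    have h8 : r * ((θc + ε) * sir2sE μ c₁ c₂ ηs η₁) =
        θc * r * sir2sE μ c₁ c₂ ηs η₁ + r * (ε * sir2sE μ c₁ c₂ ηs η₁) := by ring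
    have h9 : r * (ηs * D + η₁ * (ηs * c₁)) < r * ((θc + ε) * sir2sE μ c₁ c₂ ηs η₁) := by
      linarith [key, h7, h8]
    exact lt_of_mul_lt_mul_left (by linarith [h9]) hr0.le
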